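/- Let n ≥ 3 and 1 ≤ k ≤ n-1 be integers, and let κ ∈ ℝ^{n-1} lie in the topological closure of the Gårding cone Γ_k^+. Then σ_j(κ) ≥ 0 for all 1 ≤ j ≤ k, and for every j with 1 ≤ j ≤ k the inequality σ_{j-1}(κ) ≥ (j/(n-j)) · (binom(n-1, j))^{1/j} · σ_j(κ)^{(j-1)/j} holds (the right-hand side being interpreted via real powers of the nonnegative number σ_j(κ)). -/

import Mathlib

/-- The `j`-th elementary symmetric polynomial of `κ = (κ_1, …, κ_m) ∈ ℝ^m`,
with the conventions `σ_0 = 1` and `σ_j = 0` for `j > m`. -/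
noncomputable def esymm (m j : ℕ) (κ : Fin m → ℝ) : ℝ :=
  ∑ s ∈ Finset.powersetCard j (Finset.univ : Finset (Fin m)), ∏ i ∈ s, κ i

/-- `σ_{k;i}(κ)`: the `k`-th elementary symmetric polynomial of the `m - 1` numbers
`κ_1, …, κ_{i-1}, κ_{i+1}, …, κ_m`. -/
noncomputable def esymmWithout (m k : ℕ) (i : Fin m) (κ : Fin m → ℝ) : ℝ :=
  ∑ s ∈ Finset.powersetCard k ((Finset.univ : Finset (Fin m)).erase i), ∏ j ∈ s, κ j

/-- The Gårding cone `Γ_k^+ = {κ ∈ ℝ^m : σ_j(κ) > 0 for j = 1, …, k}`. -/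
def gardingCone (m k : ℕ) : Set (Fin m → ℝ) :=
  {κ | ∀ j, 1 ≤ j → j ≤ k → 0 < esymm m j κ}

/-! Let `E j = σ_j / binom(m, j)` with `m = n - 1`. Newton's inequalities
`E i * E (i + 2) ≤ E (i + 1) ^ 2` come from the real-rootedness of `∏ (X + κ_i)`: by Rolle,
differentiating and reversing keep a real polynomial real-rooted, and for a polynomial of degree
`a + d + 2`, taking `d` derivatives, reversing and taking `a` more derivatives leaves a quadratic
whose coefficients are factorial multiples of those of degree `d`, `d + 1`, `d + 2`; its
discriminant is nonnegative, and that is Newton's inequality.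
On `Γ_k^+` the `E j` with `j ≤ k` are positive, so this log-concavity yields Maclaurin's inequality
`E j ^ (j - 1) ≤ E (j - 1) ^ j`, which is the claimed bound because
`j / (n - j) = binom(n - 1, j - 1) / binom(n - 1, j)`. Both claims are closed conditions on `κ`, so
they pass from the cone to its closure. -/

open scoped Nat
open Polynomial

namespace Polynomial

theorem Splits.reverse {K : Type*} [Field K] {f : K[X]} (hf : f.Splits) : f.reverse.Splits := by
  induction hf using Submonoid.closure_induction with
  | mem f hf =>
    refine Splits.of_natDegree_le_one ((reverse_natDegree_le f).trans ?_)
    rcases hf with ⟨a, rfl⟩ | ⟨a, rfl⟩ <;> simp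
  | one => exact Splits.of_natDegree_le_one ((reverse_natDegree_le 1).trans (by simp))
  | mul f g _ _ hf hg => rw [reverse_mul_of_domain]; exact hf.mul hg

theorem Splits.derivative {p : ℝ[X]} (hp : p.Splits) : (Polynomial.derivative p).Splits := by
  rw [splits_iff_card_roots] at hp ⊢
  have := card_roots_le_derivative p
  have := (Polynomial.derivative p).card_roots'
  have := natDegree_derivative_le p
  omega

theorem Splits.iterate_derivative {p : ℝ[X]} (hp : p.Splits) (k : ℕ) :
    (Polynomial.derivative^[k] p).Splits := by
  induction k with
  | zero => exact hp
  | succ k ih => rw [Function.iterate_succ_apply']; exact ih.derivative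

theorem Splits.discrim_nonneg {K : Type*} [Field K] [LinearOrder K] [IsStrictOrderedRing K]
    {p : K[X]} (hp : p.Splits) (hdeg : p.natDegree ≤ 2) :
    0 ≤ discrim (p.coeff 2) (p.coeff 1) (p.coeff 0) := by
  rcases eq_or_ne (p.coeff 2) 0 with h2 | h2
  · rw [discrim, h2]; nlinarith
  have hdeg2 : p.degree = 2 := by
    rw [degree_eq_natDegree (by rintro rfl; simp at h2),
      le_antisymm hdeg (le_natDegree_of_ne_zero h2)]; rfl
  obtain ⟨x, hx⟩ := hp.exists_eval_eq_zero (by rw [hdeg2]; decide)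
  rw [eval_eq_sum_range' (n := 3) (by omega)] at hx
  rw [discrim_eq_sq_of_quadratic_eq_zero (x := x)
    (by simp [Finset.sum_range_succ] at hx; linear_combination hx)]
  positivity

theorem factorial_mul_coeff_iterate_derivative {R : Type*} [CommSemiring R] (p : R[X])
    (k s : ℕ) :
    (s ! : R) * (derivative^[k] p).coeff s = ((s + k)! : R) * p.coeff (s + k) := by
  rw [coeff_iterate_derivative, nsmul_eq_mul, ← mul_assoc, ← Nat.cast_mul,
    ← Nat.factorial_mul_descFactorial (Nat.le_add_left k s), Nat.add_sub_cancel]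

theorem Splits.newton {p : ℝ[X]} (hp : p.Splits) {a d : ℕ} (hdeg : p.natDegree = a + d + 2) :
    ((a : ℝ) + 2) * ((d : ℝ) + 2) * (p.coeff d * p.coeff (d + 2)) ≤
      ((a : ℝ) + 1) * ((d : ℝ) + 1) * p.coeff (d + 1) ^ 2 := by
  set g := Polynomial.derivative^[d] p
  set q := Polynomial.derivative^[a] g.reverse
  have hg : ∀ s, (s ! : ℝ) * g.coeff s = ((s + d)! : ℝ) * p.coeff (s + d) :=
    factorial_mul_coeff_iterate_derivative p d
  have hgdeg : g.natDegree = a + 2 := by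
    refine le_antisymm ((natDegree_iterate_derivative p d).trans (by omega))
      (le_natDegree_of_ne_zero fun h => ?_)
    have hlead := hg (a + 2)
    rw [h, mul_zero, show a + 2 + d = p.natDegree by omega, coeff_natDegree] at hlead
    have hp0 : p ≠ 0 := by rintro rfl; simp at hdeg
    simp [Nat.factorial_ne_zero, hp0] at hlead
  have hq : ∀ s ≤ 2, (s ! : ℝ) * q.coeff s = ((s + a)! : ℝ) * g.coeff (2 - s) := by
    intro s hs
    rw [factorial_mul_coeff_iterate_derivative, coeff_reverse, hgdeg,
      revAt_le (show s + a ≤ a + 2 by omega), show a + 2 - (s + a) = 2 - s by omega]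
  have hdisc : 0 ≤ discrim (q.coeff 2) (q.coeff 1) (q.coeff 0) :=
    (((hp.iterate_derivative d).reverse).iterate_derivative a).discrim_nonneg
      ((natDegree_iterate_derivative g.reverse a).trans (by have := reverse_natDegree_le g; omega))
  have hq0 : q.coeff 0 = a ! * ((d + 2)! / 2 * p.coeff (d + 2)) := by
    have h0 := hq 0 (by norm_num)
    have h2 := hg 2
    simp only [Nat.factorial_zero, Nat.factorial_two, Nat.cast_one, Nat.cast_two, zero_add,
      add_comm 2 d] at h0 h2
    linear_combination h0 + (a ! / 2 : ℝ) * h2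
  have hq1 : q.coeff 1 = (a + 1)! * ((d + 1)! * p.coeff (d + 1)) := by
    have h1 := hq 1 (by norm_num)
    have h1' := hg 1
    simp only [Nat.factorial_one, Nat.cast_one, one_mul, add_comm 1 a, add_comm 1 d] at h1 h1'
    linear_combination h1 + ((a + 1)! : ℝ) * h1'
  have hq2 : q.coeff 2 = (a + 2)! / 2 * (d ! * p.coeff d) := by
    have h2 := hq 2 le_rfl
    have h0 := hg 0
    simp only [Nat.factorial_zero, Nat.factorial_two, Nat.cast_one, Nat.cast_two, one_mul,
      zero_add, add_comm 2 a, Nat.sub_self] at h2 h0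
    linear_combination h2 / 2 + ((a + 2)! / 2 : ℝ) * h0
  have hfac : 0 < ((a + 1) * (d + 1) * (a ! * d !) ^ 2 : ℝ) := by positivity
  have key : discrim (q.coeff 2) (q.coeff 1) (q.coeff 0) =
      ((a + 1) * (d + 1) * (a ! * d !) ^ 2 : ℝ) * ((a + 1) * (d + 1) * p.coeff (d + 1) ^ 2 -
        (a + 2) * (d + 2) * (p.coeff d * p.coeff (d + 2))) := by
    rw [discrim, hq0, hq1, hq2]
    push_cast [Nat.factorial_succ]
    ring
  rw [key] at hdisc
  exact sub_nonneg.mp ((mul_nonneg_iff_of_pos_left hfac).mp hdisc)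

end Polynomial

noncomputable def esymmMean (m j : ℕ) (κ : Fin m → ℝ) : ℝ :=
  esymm m j κ / m.choose j

theorem continuous_esymm (m j : ℕ) : Continuous (esymm m j) := by
  unfold esymm
  fun_prop

theorem esymm_zero (m : ℕ) (κ : Fin m → ℝ) : esymm m 0 κ = 1 := by
  simp [esymm]

theorem coeff_prod_X_add_C_eq_esymm {m s : ℕ} (κ : Fin m → ℝ) (hs : s ≤ m) :
    (∏ i, (X + C (κ i))).coeff s = esymm m (m - s) κ := by
  rw [Finset.prod_eq_multiset_prod, Multiset.prod_X_add_C_coeff' _ _ (by simpa using hs),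
    Finset.esymm_map_val]
  simp [esymm]

theorem esymmMean_mul_le_sq {m i : ℕ} (κ : Fin m → ℝ) (hi : i + 2 ≤ m) :
    esymmMean m i κ * esymmMean m (i + 2) κ ≤ esymmMean m (i + 1) κ ^ 2 := by
  obtain ⟨d, rfl⟩ : ∃ d, m = i + d + 2 := ⟨m - i - 2, by omega⟩
  set f : ℝ[X] := ∏ t, (X + C (κ t))
  have hf : f.Splits := Splits.prod fun t _ => Splits.X_add_C (κ t)
  have hfdeg : f.natDegree = i + d + 2 := by
    rw [natDegree_prod_of_monic _ _ fun t _ => monic_X_add_C (κ t)]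
    simp
  have hnewton := hf.newton (a := i) (d := d) hfdeg
  rw [coeff_prod_X_add_C_eq_esymm κ (by omega), coeff_prod_X_add_C_eq_esymm κ (by omega),
    coeff_prod_X_add_C_eq_esymm κ (by omega), show i + d + 2 - d = i + 2 by omega,
    show i + d + 2 - (d + 1) = i + 1 by omega, show i + d + 2 - (d + 2) = i by omega] at hnewton
  have hc1 := Nat.choose_succ_right_eq (i + d + 2) i
  have hc2 := Nat.choose_succ_right_eq (i + d + 2) (i + 1)
  rw [show i + d + 2 - i = d + 2 by omega] at hc1
  rw [show i + d + 2 - (i + 1) = d + 1 by omega] at hc2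
  have hpos : ∀ t ≤ i + d + 2, (0 : ℝ) < (i + d + 2).choose t := fun t ht => by
    exact_mod_cast Nat.choose_pos ht
  have hc1' : ((i + d + 2).choose (i + 1) : ℝ) * (i + 1) = (i + d + 2).choose i * (d + 2) := by
    exact_mod_cast hc1
  have hc2' : ((i + d + 2).choose (i + 2) : ℝ) * (i + 2) =
      (i + d + 2).choose (i + 1) * (d + 1) := by
    exact_mod_cast hc2
  set σ₀ := esymm (i + d + 2) i κ
  set σ₁ := esymm (i + d + 2) (i + 1) κ
  set σ₂ := esymm (i + d + 2) (i + 2) κ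
  set c₀ : ℝ := ((i + d + 2).choose i : ℝ)
  set c₁ : ℝ := ((i + d + 2).choose (i + 1) : ℝ)
  set c₂ : ℝ := ((i + d + 2).choose (i + 2) : ℝ)
  have hc₀ : 0 < c₀ := hpos i (by omega)
  have hc₂ : 0 < c₂ := hpos (i + 2) (by omega)
  unfold esymmMean
  rw [div_mul_div_comm, div_pow,
    div_le_div_iff₀ (by positivity) (pow_pos (hpos (i + 1) (by omega)) 2)]
  refine le_of_mul_le_mul_left ?_ (by positivity : (0 : ℝ) < (i + 1) * (d + 1))
  calc ((i : ℝ) + 1) * (d + 1) * (σ₀ * σ₂ * c₁ ^ 2)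
      = (i + 2) * (d + 2) * (σ₂ * σ₀) * (c₀ * c₂) := by
        linear_combination σ₀ * σ₂ * c₁ * (d + 1) * hc1' - σ₀ * σ₂ * c₀ * (d + 2) * hc2'
    _ ≤ (i + 1) * (d + 1) * σ₁ ^ 2 * (c₀ * c₂) := by gcongr
    _ = (i + 1) * (d + 1) * (σ₁ ^ 2 * (c₀ * c₂)) := by ring

theorem esymm_pos_of_mem_gardingCone {m k j : ℕ} {κ : Fin m → ℝ} (hκ : κ ∈ gardingCone m k)
    (hj : j ≤ k) : 0 < esymm m j κ := by
  rcases j with _ | j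
  · simp [esymm_zero]
  · exact hκ (j + 1) (by omega) hj

theorem pow_succ_le_pow_of_mul_le_sq {E : ℕ → ℝ} {k : ℕ} (h0 : E 0 = 1)
    (hpos : ∀ t ≤ k, 0 < E t) (hE : ∀ i, i + 2 ≤ k → E i * E (i + 2) ≤ E (i + 1) ^ 2) :
    ∀ j, j + 1 ≤ k → E (j + 1) ^ j ≤ E j ^ (j + 1) := by
  intro j
  induction j with
  | zero => simp [h0]
  | succ j ih =>
    intro hj
    have h₀ := hpos j (by omega)
    have h₁ := hpos (j + 1) (by omega)
    have h₂ := hpos (j + 2) (by omega)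
    refine le_of_mul_le_mul_left ?_ (pow_pos h₁ j)
    calc E (j + 1) ^ j * E (j + 2) ^ (j + 1) ≤ E j ^ (j + 1) * E (j + 2) ^ (j + 1) := by
          gcongr; exact ih (by omega)
      _ = (E j * E (j + 2)) ^ (j + 1) := (mul_pow _ _ _).symm
      _ ≤ (E (j + 1) ^ 2) ^ (j + 1) := by gcongr; exact hE j hj
      _ = E (j + 1) ^ j * E (j + 1) ^ (j + 1 + 1) := by ring

theorem esymmMean_pow_succ_le {m k : ℕ} {κ : Fin m → ℝ} (hk : k ≤ m) (hκ : κ ∈ gardingCone m k)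
    {j : ℕ} (hj : j + 1 ≤ k) : esymmMean m (j + 1) κ ^ j ≤ esymmMean m j κ ^ (j + 1) := by
  refine pow_succ_le_pow_of_mul_le_sq (E := fun t => esymmMean m t κ)
    (by simp [esymmMean, esymm_zero]) (fun t ht => ?_)
    (fun i hi => esymmMean_mul_le_sq κ (by omega)) j hj
  exact div_pos (esymm_pos_of_mem_gardingCone hκ ht)
    (by exact_mod_cast Nat.choose_pos (by omega))

theorem div_mul_choose_rpow_mul_esymm_rpow_le {m k : ℕ} {κ : Fin m → ℝ} (hk : k ≤ m)
    (hκ : κ ∈ gardingCone m k) {j : ℕ} (hj1 : 1 ≤ j) (hjk : j ≤ k) :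
    (j : ℝ) / ((m : ℝ) + 1 - j) * (m.choose j : ℝ) ^ ((1 : ℝ) / j) *
      esymm m j κ ^ (((j : ℝ) - 1) / j) ≤ esymm m (j - 1) κ := by
  obtain ⟨i, rfl⟩ : ∃ i, j = i + 1 := ⟨j - 1, by omega⟩
  have hσ : 0 < esymm m (i + 1) κ := hκ (i + 1) hj1 hjk
  have hc₀ : (0 : ℝ) < m.choose i := by exact_mod_cast Nat.choose_pos (by omega)
  have hc₁ : (0 : ℝ) < m.choose (i + 1) := by exact_mod_cast Nat.choose_pos (by omega)
  simp only [Nat.add_sub_cancel]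
  push_cast
  rw [add_sub_cancel_right, show (m : ℝ) + 1 - (i + 1) = ((m - i : ℕ) : ℝ) by
    push_cast [Nat.cast_sub (show i ≤ m by omega)]; ring]
  set e : ℝ := (i : ℝ) / (i + 1)
  have he : e * ((i : ℝ) + 1) = i := div_mul_cancel₀ _ (by positivity)
  have hratio : ((i : ℝ) + 1) / ((m - i : ℕ) : ℝ) = m.choose i / m.choose (i + 1) := by
    have h : (m.choose (i + 1) : ℝ) * (i + 1) = m.choose i * ((m - i : ℕ) : ℝ) := by
      exact_mod_cast Nat.choose_succ_right_eq m i
    have hmi : (0 : ℝ) < ((m - i : ℕ) : ℝ) := by exact_mod_cast (show 0 < m - i by omega)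
    rw [div_eq_div_iff hmi.ne' hc₁.ne']
    linear_combination h
  have hsplit : (m.choose (i + 1) : ℝ) ^ (1 / ((i : ℝ) + 1)) * (m.choose (i + 1) : ℝ) ^ e =
      m.choose (i + 1) := by
    rw [← Real.rpow_add hc₁, show 1 / ((i : ℝ) + 1) + e = 1 by field_simp; linear_combination he,
      Real.rpow_one]
  have hmean : esymmMean m (i + 1) κ ^ e ≤ esymmMean m i κ := by
    have hE : 0 ≤ esymmMean m (i + 1) κ := div_nonneg hσ.le hc₁.le
    have hE' : 0 ≤ esymmMean m i κ :=
      div_nonneg (esymm_pos_of_mem_gardingCone hκ (by omega)).le hc₀.le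
    rw [← pow_le_pow_iff_left₀ (Real.rpow_nonneg hE e) hE' (Nat.succ_ne_zero i),
      ← Real.rpow_natCast (_ ^ e), ← Real.rpow_mul hE,
      show e * ((i + 1 : ℕ) : ℝ) = (i : ℕ) by push_cast; exact he, Real.rpow_natCast]
    exact esymmMean_pow_succ_le hk hκ hjk
  calc ((i : ℝ) + 1) / ((m - i : ℕ) : ℝ) * (m.choose (i + 1) : ℝ) ^ (1 / ((i : ℝ) + 1)) *
        esymm m (i + 1) κ ^ e
      = m.choose i * esymmMean m (i + 1) κ ^ e := by
        rw [hratio, esymmMean, Real.div_rpow hσ.le hc₁.le]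
        field_simp
        linear_combination hsplit
    _ ≤ m.choose i * esymmMean m i κ := by gcongr
    _ = esymm m i κ := by rw [esymmMean]; field_simp

theorem stmt_2_general (n k : ℕ) (hk2 : k ≤ n - 1)
    (κ : Fin (n - 1) → ℝ) (hκ : κ ∈ closure (gardingCone (n - 1) k)) :
    (∀ j, 1 ≤ j → j ≤ k → 0 ≤ esymm (n - 1) j κ) ∧
    (∀ j, 1 ≤ j → j ≤ k →
      esymm (n - 1) (j - 1) κ ≥
        ((j : ℝ) / ((n : ℝ) - j)) * ((Nat.choose (n - 1) j : ℝ)) ^ ((1 : ℝ) / j) *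
          (esymm (n - 1) j κ) ^ (((j : ℝ) - 1) / j)) := by
  refine ⟨fun j hj1 hjk => ?_, fun j hj1 hjk => ?_⟩
  · exact closure_minimal (fun x hx => (hx j hj1 hjk).le)
      (isClosed_le continuous_const (continuous_esymm _ j)) hκ
  · have hn : (n : ℝ) = ((n - 1 : ℕ) : ℝ) + 1 := by
      rw [Nat.cast_sub (by omega)]; ring
    have hexp : 0 ≤ ((j : ℝ) - 1) / j :=
      div_nonneg (sub_nonneg.mpr (by exact_mod_cast hj1)) j.cast_nonneg
    rw [hn]
    exact closure_minimal (fun x hx => div_mul_choose_rpow_mul_esymm_rpow_le hk2 hx hj1 hjk)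
      (isClosed_le (continuous_const.mul ((Real.continuous_rpow_const hexp).comp
        (continuous_esymm _ j))) (continuous_esymm _ _)) hκ

/-- On the closure of the Gårding cone, `σ_j ≥ 0` and the Maclaurin-type
inequality continues to hold. -/
theorem stmt_2 (n k : ℕ) (hn : 3 ≤ n) (hk1 : 1 ≤ k) (hk2 : k ≤ n - 1)
    (κ : Fin (n - 1) → ℝ) (hκ : κ ∈ closure (gardingCone (n - 1) k)) :
    (∀ j, 1 ≤ j → j ≤ k → 0 ≤ esymm (n - 1) j κ) ∧
    (∀ j, 1 ≤ j → j ≤ k →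
      esymm (n - 1) (j - 1) κ ≥
        ((j : ℝ) / ((n : ℝ) - j)) * ((Nat.choose (n - 1) j : ℝ)) ^ ((1 : ℝ) / j) *
          (esymm (n - 1) j κ) ^ (((j : ℝ) - 1) / j)) :=
  stmt_2_general n k hk2 κ hκ
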